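/- arXiv:math/0003231 — 3 statements merged into one kernel-verified Lean document; each statement's English description precedes it below -/
import Mathlib

section
/- Let τ₃, τ₄ : 𝔽₂⁴ → 𝔽₂⁴ be the linear maps given by τ₃(ξ₁,ξ₂,ξ₃,ξ₄) = (ξ₁,ξ₂,ξ₃+ξ₁,ξ₄) and τ₄(ξ₁,ξ₂,ξ₃,ξ₄) = (ξ₁,ξ₂,ξ₃,ξ₄+ξ₃+ξ₂). Then the group Γ generated by τ₃ and τ₄ acting on 𝔽₂⁴ has exactly 8 orbits. -/
/-- The transvection `τ₃ : ξ₃ ↦ ξ₃ + ξ₁` on `𝔽₂⁴` (0-indexed coordinates). -/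
def tau3fun : (Fin 4 → ZMod 2) → (Fin 4 → ZMod 2) :=
  fun ξ k => if k = 2 then ξ 2 + ξ 0 else ξ k

/-- The transvection `τ₄ : ξ₄ ↦ ξ₄ + ξ₃ + ξ₂` on `𝔽₂⁴`. -/
def tau4fun : (Fin 4 → ZMod 2) → (Fin 4 → ZMod 2) :=
  fun ξ k => if k = 3 then ξ 3 + ξ 2 + ξ 1 else ξ k

def tau3 : Equiv.Perm (Fin 4 → ZMod 2) :=
  Function.Involutive.toPerm tau3fun (show ∀ x, tau3fun (tau3fun x) = x by decide)

def tau4 : Equiv.Perm (Fin 4 → ZMod 2) :=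
  Function.Involutive.toPerm tau4fun (show ∀ x, tau4fun (tau4fun x) = x by decide)

/-- The group generated by the transvections `τ₃`, `τ₄` (type `B₂`). -/
def GammaB2 : Subgroup (Equiv.Perm (Fin 4 → ZMod 2)) := Subgroup.closure {tau3, tau4}

/-- Orbit representatives. -/
def repB2 : Fin 8 → (Fin 4 → ZMod 2) :=
  ![![0,0,0,0], ![0,0,0,1], ![0,0,1,0], ![1,0,0,0], ![0,1,0,0], ![0,1,1,0],
    ![0,1,1,1], ![1,1,0,0]]

/-- Orbit invariant. -/
def inv8 : (Fin 4 → ZMod 2) → Fin 8 := fun ξ =>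
  if ξ 0 = 1 then (if ξ 1 = 1 then 7 else 3)
  else if ξ 1 = 1 then (if ξ 2 = 0 then 4 else if ξ 3 = 0 then 5 else 6)
  else if ξ 2 = 1 then 2 else if ξ 3 = 1 then 1 else 0

lemma tau3_mem : tau3 ∈ GammaB2 := Subgroup.subset_closure (by simp)
lemma tau4_mem : tau4 ∈ GammaB2 := Subgroup.subset_closure (by simp)

lemma inv8_tau3 : ∀ x, inv8 (tau3 x) = inv8 x := by decide
lemma inv8_tau4 : ∀ x, inv8 (tau4 x) = inv8 x := by decide

lemma inv8_smul (g : Equiv.Perm (Fin 4 → ZMod 2)) (hg : g ∈ GammaB2) :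
    ∀ x, inv8 (g x) = inv8 x := by
  induction hg using Subgroup.closure_induction with
  | mem t ht =>
    rcases ht with h | h
    · subst h; exact inv8_tau3
    · rw [Set.mem_singleton_iff] at h; subst h; exact inv8_tau4
  | one => intro x; rfl
  | mul a b _ _ ha hb => intro x; simp [Equiv.Perm.mul_apply, ha, hb]
  | inv a _ ha => intro x; have := ha (a⁻¹ x); simpa using this.symm

lemma reach_words : ∀ x : Fin 4 → ZMod 2,
    x = repB2 (inv8 x) ∨ x = tau3 (repB2 (inv8 x)) ∨ x = tau4 (repB2 (inv8 x)) ∨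
    x = tau4 (tau3 (repB2 (inv8 x))) ∨ x = tau3 (tau4 (repB2 (inv8 x))) ∨
    x = tau3 (tau4 (tau3 (repB2 (inv8 x)))) := by
  decide

lemma reach (x : Fin 4 → ZMod 2) : x ∈ MulAction.orbit GammaB2 (repB2 (inv8 x)) := by
  rcases reach_words x with h | h | h | h | h | h
  · exact ⟨⟨1, one_mem _⟩, h.symm⟩
  · exact ⟨⟨tau3, tau3_mem⟩, h.symm⟩
  · exact ⟨⟨tau4, tau4_mem⟩, h.symm⟩
  · exact ⟨⟨tau4 * tau3, mul_mem tau4_mem tau3_mem⟩, h.symm⟩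
  · exact ⟨⟨tau3 * tau4, mul_mem tau3_mem tau4_mem⟩, h.symm⟩
  · exact ⟨⟨tau3 * (tau4 * tau3), mul_mem tau3_mem (mul_mem tau4_mem tau3_mem)⟩, h.symm⟩

lemma inv8_rep : ∀ i : Fin 8, inv8 (repB2 i) = i := by decide

/-- The group generated by `τ₃` and `τ₄` has exactly `8` orbits on `𝔽₂⁴`. -/
theorem GammaB2_card_orbits :
    Nat.card (MulAction.orbitRel.Quotient GammaB2 (Fin 4 → ZMod 2)) = 8 := by
  have hlift : ∀ a b : Fin 4 → ZMod 2,
      MulAction.orbitRel GammaB2 (Fin 4 → ZMod 2) a b → inv8 a = inv8 b := by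
    intro a b h
    obtain ⟨⟨g, hg⟩, rfl⟩ := h
    exact inv8_smul g hg b
  let f : MulAction.orbitRel.Quotient GammaB2 (Fin 4 → ZMod 2) → Fin 8 :=
    Quotient.lift inv8 hlift
  have hbij : Function.Bijective f := by
    constructor
    · intro a b
      induction a using Quotient.inductionOn with | h a =>
      induction b using Quotient.inductionOn with | h b =>
      intro h
      have ha := reach a
      have hb := reach b
      have h' : inv8 a = inv8 b := h
      rw [h'] at ha
      have ha' : MulAction.orbitRel GammaB2 (Fin 4 → ZMod 2) a (repB2 (inv8 b)) := ha
      have hb' : MulAction.orbitRel GammaB2 (Fin 4 → ZMod 2) b (repB2 (inv8 b)) := hb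
      exact Quotient.sound ((MulAction.orbitRel GammaB2 (Fin 4 → ZMod 2)).iseqv.trans ha'
        ((MulAction.orbitRel GammaB2 (Fin 4 → ZMod 2)).iseqv.symm hb'))
    · intro i
      exact ⟨Quotient.mk _ (repB2 i), inv8_rep i⟩
  have := Nat.card_congr (Equiv.ofBijective f hbij)
  simp [this]
end

section
/- With τ₃,...,τ₆ on 𝔽₂⁶ as above, the 12-element set S = {001111, 001011, 001010, 001000, 001101, 001100, 000101, 000100, 000001, 000110, 000011, 000010} is a single orbit of the group generated by τ₃, τ₄, τ₅, τ₆. -/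
/-- For `n ∈ {3,4,5,6}` (0-indexed: `2,3,4,5`), the transvection
`τ_n : ξ_n ↦ ∑_{|k−n| ≤ 2} ξ_k` on `𝔽₂⁶`, fixing all other coordinates. -/
def tauG (n : Fin 6) : (Fin 6 → ZMod 2) → (Fin 6 → ZMod 2) :=
  fun ξ k => if k = n then
      ∑ j ∈ Finset.univ.filter (fun j : Fin 6 => ((j : ℤ) - (n : ℤ)).natAbs ≤ 2), ξ j
    else ξ k

theorem tauG_involutive : ∀ n : Fin 6, ∀ x, tauG n (tauG n x) = x := by decide

def tauGPerm (n : Fin 6) : Equiv.Perm (Fin 6 → ZMod 2) :=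
  Function.Involutive.toPerm (tauG n) (tauG_involutive n)

/-- The group generated by the transvections `τ₃, τ₄, τ₅, τ₆` (type `G₂`). -/
def GammaG2 : Subgroup (Equiv.Perm (Fin 6 → ZMod 2)) :=
  Subgroup.closure {tauGPerm 2, tauGPerm 3, tauGPerm 4, tauGPerm 5}

/-!
The set is invariant under each generator `τ_n`, a finite check; since it is finite, each `τ_n`
even permutes it, so it is invariant under the whole group and contains the orbit of `001111`.
Conversely every one of its twelve points is the image of `001111` under an explicit word in the
`τ_n`.
-/

open MulAction Pointwise

theorem MulAction.orbit_closure_subset_of_forall_smul_mem {G α : Type*} [Group G]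
    [MulAction G α] {s : Set G} {S : Set α} (hfin : S.Finite) (hS : ∀ g ∈ s, ∀ y ∈ S, g • y ∈ S)
    {x : α} (hx : x ∈ S) : orbit (Subgroup.closure s) x ⊆ S := by
  have hle : Subgroup.closure s ≤ stabilizer G S :=
    (Subgroup.closure_le _).2 fun g hg => (mem_stabilizer_set' hfin).2 (hS g hg)
  rintro _ ⟨g, rfl⟩
  exact (mem_stabilizer_set' hfin).1 (hle g.2) hx

def tauIndices : Finset (Fin 6) := {2, 3, 4, 5}

theorem GammaG2_eq_closure_image : GammaG2 = Subgroup.closure (tauGPerm '' tauIndices) := by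
  simp [GammaG2, tauIndices, Set.image_insert_eq]

def twelveOrbit : Finset (Fin 6 → ZMod 2) :=
  { ![0,0,1,1,1,1], ![0,0,1,0,1,1], ![0,0,1,0,1,0], ![0,0,1,0,0,0],
    ![0,0,1,1,0,1], ![0,0,1,1,0,0], ![0,0,0,1,0,1], ![0,0,0,1,0,0],
    ![0,0,0,0,0,1], ![0,0,0,1,1,0], ![0,0,0,0,1,1], ![0,0,0,0,1,0] }

theorem tauGPerm_mem_twelveOrbit :
    ∀ n ∈ tauIndices, ∀ y ∈ twelveOrbit, tauGPerm n y ∈ twelveOrbit := by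
  decide

/-- The letters are applied right to left. -/
def tauWord (w : List (Fin 6)) : Equiv.Perm (Fin 6 → ZMod 2) := (w.map tauGPerm).prod

theorem tauWord_mem_GammaG2 {w : List (Fin 6)} (hw : ∀ n ∈ w, n ∈ tauIndices) :
    tauWord w ∈ GammaG2 := by
  rw [GammaG2_eq_closure_image]
  refine Subgroup.list_prod_mem _ fun g hg => ?_
  obtain ⟨n, hn, rfl⟩ := List.mem_map.1 hg
  exact Subgroup.subset_closure (Set.mem_image_of_mem _ (hw n hn))

def spanningWords : List (List (Fin 6)) :=
  [[], [3], [5, 3], [4, 5, 3], [4], [5, 4], [2, 4], [5, 2, 4], [4, 2, 3], [3, 5, 2, 3], [2, 3],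
    [5, 2, 3]]

theorem spanningWords_letters_mem : ∀ w ∈ spanningWords, ∀ n ∈ w, n ∈ tauIndices := by
  decide

theorem exists_spanningWord :
    ∀ y ∈ twelveOrbit, ∃ w ∈ spanningWords, tauWord w ![0,0,1,1,1,1] = y := by
  decide

/-- The `12`-element set
`{001111, 001011, 001010, 001000, 001101, 001100, 000101, 000100, 000001, 000110, 000011, 000010}`
(bit strings `ξ₁…ξ₆`) is a single orbit of `⟨τ₃, τ₄, τ₅, τ₆⟩` on `𝔽₂⁶`. -/
theorem GammaG2_twelve_element_orbit :
    MulAction.orbit GammaG2 (![0,0,1,1,1,1] : Fin 6 → ZMod 2) =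
      { ![0,0,1,1,1,1], ![0,0,1,0,1,1], ![0,0,1,0,1,0], ![0,0,1,0,0,0],
        ![0,0,1,1,0,1], ![0,0,1,1,0,0], ![0,0,0,1,0,1], ![0,0,0,1,0,0],
        ![0,0,0,0,0,1], ![0,0,0,1,1,0], ![0,0,0,0,1,1], ![0,0,0,0,1,0] } := by
  refine .trans ?_ (by simp [twelveOrbit] : (twelveOrbit : Set (Fin 6 → ZMod 2)) = _)
  refine Set.Subset.antisymm ?_ fun y hy => ?_
  · rw [GammaG2_eq_closure_image]
    exact orbit_closure_subset_of_forall_smul_mem twelveOrbit.finite_toSet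
      (Set.forall_mem_image.2 tauGPerm_mem_twelveOrbit) (by decide)
  · obtain ⟨w, hw, rfl⟩ := exists_spanningWord y hy
    exact ⟨⟨tauWord w, tauWord_mem_GammaG2 (spanningWords_letters_mem w hw)⟩, rfl⟩
end

section
/- Let T be a topological space and let (U_ξ)_{ξ ∈ 𝔽₂^m} be a family of nonempty connected subsets of T whose union of closures is all of T. Let Γ be a group acting on 𝔽₂^m, generated by elements g₁,...,g_r. Suppose that for distinct ξ, η ∈ 𝔽₂^m, the closures of U_ξ and U_η intersect if and only if η = g_j(ξ) for some j. Then the map sending a Γ-orbit Ω to ⋃_{ξ∈Ω} closure(U_ξ) is a bijection from the set of Γ-orbits in 𝔽₂^m onto the set of connected components of T. -/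
set_option synthInstance.maxHeartbeats 1000000
set_option maxHeartbeats 1000000

/-- Topological skeleton of Theorem 3.2: if `T` is covered by the closures of connected
(nonempty) sets `U_ξ`, `ξ ∈ 𝔽₂^m`, a group `Γ` generated by `g₁,…,g_r` acts on `𝔽₂^m`, and
for distinct `ξ, η` the closures of `U_ξ` and `U_η` meet iff `η = g_j • ξ` for some `j`, then
`Ω ↦ ⋃_{ξ ∈ Ω} closure (U_ξ)` is a bijection from `Γ`-orbits to connected components of `T`. -/
theorem orbits_bij_connectedComponents (T : Type*) [TopologicalSpace T] (m : ℕ)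
    (U : (Fin m → ZMod 2) → Set T) (hU : ∀ ξ, IsConnected (U ξ))
    (hcover : ⋃ ξ, closure (U ξ) = Set.univ)
    (Γ : Type*) [Group Γ] [MulAction Γ (Fin m → ZMod 2)]
    (r : ℕ) (g : Fin r → Γ) (hgen : Subgroup.closure (Set.range g) = ⊤)
    (hint : ∀ ξ η, ξ ≠ η →
      ((closure (U ξ) ∩ closure (U η)).Nonempty ↔ ∃ j, g j • ξ = η)) :
    (∀ Ω : Quotient (MulAction.orbitRel Γ (Fin m → ZMod 2)), ∃ x : T,
        (⋃ ξ ∈ {ξ | Quotient.mk (MulAction.orbitRel Γ (Fin m → ZMod 2)) ξ = Ω},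
          closure (U ξ)) = connectedComponent x) ∧
    Function.Injective (fun Ω : Quotient (MulAction.orbitRel Γ (Fin m → ZMod 2)) =>
        ⋃ ξ ∈ {ξ | Quotient.mk (MulAction.orbitRel Γ (Fin m → ZMod 2)) ξ = Ω},
          closure (U ξ)) ∧
    ∀ x : T, ∃ Ω : Quotient (MulAction.orbitRel Γ (Fin m → ZMod 2)),
        (⋃ ξ ∈ {ξ | Quotient.mk (MulAction.orbitRel Γ (Fin m → ZMod 2)) ξ = Ω},
          closure (U ξ)) = connectedComponent x := by
  classical
  have hconn : ∀ ξ : Fin m → ZMod 2, IsConnected (closure (U ξ)) := fun ξ => (hU ξ).closure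
  -- key: moving by any group element stays in the same connected component
  have key : ∀ γ : Γ, ∀ ξ : Fin m → ZMod 2, ∀ y ∈ closure (U ξ),
      closure (U (γ • ξ)) ⊆ connectedComponent y := by
    intro γ
    have hγ : γ ∈ Subgroup.closure (Set.range g) := by rw [hgen]; exact Subgroup.mem_top γ
    induction hγ using Subgroup.closure_induction with
    | mem a ha =>
      obtain ⟨j, rfl⟩ := ha
      intro ξ y hy
      by_cases h : g j • ξ = ξ
      · rw [h]
        exact (hconn ξ).isPreconnected.subset_connectedComponent hy
      · have hne : ξ ≠ g j • ξ := fun h' => h h'.symm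
        obtain ⟨z, hz1, hz2⟩ := (hint ξ (g j • ξ) hne).mpr ⟨j, rfl⟩
        have h1 : closure (U ξ) ⊆ connectedComponent z :=
          (hconn ξ).isPreconnected.subset_connectedComponent hz1
        have h2 : closure (U (g j • ξ)) ⊆ connectedComponent z :=
          (hconn _).isPreconnected.subset_connectedComponent hz2
        have : connectedComponent y = connectedComponent z :=
          (connectedComponent_eq (h1 hy)).symm
        rw [this]; exact h2
    | one =>
      intro ξ y hy
      rw [one_smul]
      exact (hconn ξ).isPreconnected.subset_connectedComponent hy
    | mul a b _ _ ha hb =>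
      intro ξ y hy
      rw [mul_smul]
      obtain ⟨z, hz⟩ := (hconn (b • ξ)).nonempty
      have h1 : closure (U (b • ξ)) ⊆ connectedComponent y := hb ξ y hy
      have h2 : closure (U (a • b • ξ)) ⊆ connectedComponent z := ha (b • ξ) z hz
      have : connectedComponent y = connectedComponent z := connectedComponent_eq (h1 hz)
      rw [this]; exact h2
    | inv a _ ha =>
      intro ξ y hy
      obtain ⟨z, hz⟩ := (hconn (a⁻¹ • ξ)).nonempty
      have h1 : closure (U (a • a⁻¹ • ξ)) ⊆ connectedComponent z := ha (a⁻¹ • ξ) z hz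
      rw [smul_inv_smul] at h1
      have hyz : connectedComponent y = connectedComponent z :=
        (connectedComponent_eq (h1 hy)).symm
      rw [hyz]
      exact (hconn _).isPreconnected.subset_connectedComponent hz
  -- biUnions of closures are closed (finite index type)
  have hclosed : ∀ s : Set (Fin m → ZMod 2), IsClosed (⋃ ξ ∈ s, closure (U ξ)) := fun s =>
    s.toFinite.isClosed_biUnion (fun _ _ => isClosed_closure)
  -- orbit equivalence via generators
  have horb : ∀ ξ η : Fin m → ZMod 2, ξ ≠ η → (closure (U ξ) ∩ closure (U η)).Nonempty →
      Quotient.mk (MulAction.orbitRel Γ (Fin m → ZMod 2)) ξ = Quotient.mk (MulAction.orbitRel Γ (Fin m → ZMod 2)) η := by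
    intro ξ η hne hmeet
    obtain ⟨j, hj⟩ := (hint ξ η hne).mp hmeet
    exact (Quotient.sound (MulAction.orbitRel_apply.mpr ⟨g j, hj⟩)).symm
  -- the main computation
  have main : ∀ (Ω : Quotient (MulAction.orbitRel Γ (Fin m → ZMod 2))) (ξ : Fin m → ZMod 2),
      Quotient.mk (MulAction.orbitRel Γ (Fin m → ZMod 2)) ξ = Ω → ∀ x ∈ closure (U ξ),
      (⋃ η ∈ {η : Fin m → ZMod 2 | Quotient.mk (MulAction.orbitRel Γ (Fin m → ZMod 2)) η = Ω}, closure (U η)) =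
        connectedComponent x := by
    intro Ω ξ hξ x hx
    set V := ⋃ η ∈ {η : Fin m → ZMod 2 | Quotient.mk (MulAction.orbitRel Γ (Fin m → ZMod 2)) η = Ω}, closure (U η) with hV
    have hxV : x ∈ V := Set.mem_biUnion hξ hx
    apply Set.Subset.antisymm
    · intro z hz
      simp only [hV, Set.mem_iUnion] at hz
      obtain ⟨η, hη, hzη⟩ := hz
      have : Quotient.mk (MulAction.orbitRel Γ (Fin m → ZMod 2)) η = Quotient.mk (MulAction.orbitRel Γ (Fin m → ZMod 2)) ξ :=
        hη.trans hξ.symm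
      obtain ⟨γ, hγ⟩ := MulAction.orbitRel_apply.mp (Quotient.exact this)
      have hγ' : γ • ξ = η := hγ
      exact key γ ξ x hx (by rwa [hγ'])
    · -- V is clopen
      have hVcompl : Vᶜ = ⋃ η ∈ {η : Fin m → ZMod 2 | Quotient.mk (MulAction.orbitRel Γ (Fin m → ZMod 2)) η ≠ Ω},
          closure (U η) := by
        apply Set.Subset.antisymm
        · intro z hz
          have : z ∈ ⋃ η, closure (U η) := hcover ▸ Set.mem_univ z
          obtain ⟨η, hη⟩ := Set.mem_iUnion.mp this
          refine Set.mem_biUnion ?_ hη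
          intro h
          exact hz (Set.mem_biUnion h hη)
        · intro z hz hzV
          rw [hV] at hzV
          simp only [Set.mem_iUnion] at hz hzV
          obtain ⟨η, hη, hzη⟩ := hz
          obtain ⟨η', hη', hzη'⟩ := hzV
          have hne : η ≠ η' := fun h => hη (h ▸ hη')
          exact hη ((horb η η' hne ⟨z, hzη, hzη'⟩).trans hη')
      have hVclopen : IsClopen V := by
        constructor
        · exact hclosed _
        · rw [← isClosed_compl_iff, hVcompl]
          exact hclosed _
      exact hVclopen.connectedComponent_subset hxV
  refine ⟨?_, ?_, ?_⟩
  · intro Ω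
    obtain ⟨x, hx⟩ := (hconn Ω.out).nonempty
    exact ⟨x, main Ω Ω.out Ω.out_eq x hx⟩
  · intro Ω₁ Ω₂ h
    simp only at h
    obtain ⟨x, hx⟩ := (hconn Ω₁.out).nonempty
    have hxV : x ∈ ⋃ η ∈ {η : Fin m → ZMod 2 | Quotient.mk (MulAction.orbitRel Γ (Fin m → ZMod 2)) η = Ω₂},
        closure (U η) := by
      rw [← h]
      exact Set.mem_biUnion Ω₁.out_eq hx
    simp only [Set.mem_iUnion] at hxV
    obtain ⟨η, hη, hxη⟩ := hxV
    by_cases hne : Ω₁.out = η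
    · rw [← Ω₁.out_eq, hne, hη]
    · rw [← Ω₁.out_eq, ← hη]
      exact horb Ω₁.out η hne ⟨x, hx, hxη⟩
  · intro x
    have : x ∈ ⋃ ξ, closure (U ξ) := hcover ▸ Set.mem_univ x
    obtain ⟨ξ, hξ⟩ := Set.mem_iUnion.mp this
    exact ⟨Quotient.mk (MulAction.orbitRel Γ (Fin m → ZMod 2)) ξ, main _ ξ rfl x hξ⟩
end
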